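/- arXiv:1005.1625 — 3 statements merged into one kernel-verified Lean document; each statement's English description precedes it below -/
import Mathlib

section
/- Let A₁', B₁', C₁' be an overlapping Napoleon configuration for a nondegenerate triangle ABC in the Euclidean plane, and let G₁', G₂', G₃' be the centroids of A₁'BC, AB₁'C, ABC₁' respectively. Then the area of triangle G₁'G₂'G₃' equals one sixth of the sum of the areas of the three equilateral triangles minus one half of the area of triangle ABC: Area(G₁'G₂'G₃') = (1/6)·(Area(A₁'BC) + Area(AB₁'C) + Area(ABC₁')) − (1/2)·Area(ABC). -/
/-!
Write `cross (B - A) (C - A)` for twice the signed area of `ABC`. Every triangle is the image of the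
unit right triangle under an affine map, so its area is `|cross|` times the area `κ` of that
triangle; the identity is linear in areas, so the value of `κ` never matters.

The apex of an equilateral triangle erected on `BC` is `midpoint B C + t • J (C - B)` with
`t = ±√3/2` and `J` the rotation by a right angle; the same-side condition forces `t` to have the
sign of the orientation of `ABC`, so all three apices share the same `t`. A polynomial identity then
gives `cross(G₁G₂G₃) = cross(ABC)/2 - t (a² + b² + c²)/6`, and Weitzenböck's inequality
`a² + b² + c² ≥ 4√3 · area(ABC)` shows that the centroid triangle has the orientation opposite to
`ABC`, which resolves the absolute value.
-/

open EuclideanGeometry AffineSubspace MeasureTheory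

noncomputable def triArea (X Y Z : EuclideanSpace ℝ (Fin 2)) : ℝ :=
  (volume (convexHull ℝ {X, Y, Z})).toReal

open Set Pointwise

local notation "ℝ²" => EuclideanSpace ℝ (Fin 2)

def cross (u v : ℝ²) : ℝ := u 0 * v 1 - u 1 * v 0

theorem triArea_eq_abs_cross_mul (X Y Z : ℝ²) :
    triArea X Y Z = |cross (Y - X) (Z - X)| * triArea 0 !₂[1, 0] !₂[0, 1] := by
  let L : ℝ² →ₗ[ℝ] ℝ² := Matrix.toLpLin 2 2 !![(Y - X) 0, (Z - X) 0; (Y - X) 1, (Z - X) 1]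
  have hdet : LinearMap.det L = cross (Y - X) (Z - X) := by
    simp only [L]
    rw [Matrix.toLpLin_eq_toLin, LinearMap.det_toLin, Matrix.det_fin_two_of, cross]
    ring
  have himage : X +ᵥ L '' {0, !₂[1, 0], !₂[0, 1]} = {X, Y, Z} := by
    have hY : L !₂[1, 0] = Y - X := by ext i; fin_cases i <;> simp [L]
    have hZ : L !₂[0, 1] = Z - X := by ext i; fin_cases i <;> simp [L]
    simp [image_insert_eq, hY, hZ, vadd_set_insert]
  rw [triArea, triArea, ← himage, convexHull_vadd, measure_vadd, ← L.image_convexHull,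
    Measure.addHaar_image_linearMap, ENNReal.toReal_mul, ENNReal.toReal_ofReal (abs_nonneg _),
    hdet]

theorem cross_sub_rotate (X Y Z : ℝ²) : cross (Y - X) (Z - X) = cross (Z - Y) (X - Y) := by
  simp only [cross, PiLp.sub_apply]; ring

theorem triArea_rotate (X Y Z : ℝ²) : triArea Y Z X = triArea X Y Z := by
  rw [triArea, triArea, insert_comm X Y, pair_comm X Z]

theorem dist_sq_eq_coord (x y : ℝ²) : dist x y ^ 2 = (x 0 - y 0) ^ 2 + (x 1 - y 1) ^ 2 := by
  simp [EuclideanSpace.dist_sq_eq, Fin.sum_univ_two, Real.dist_eq, sq_abs]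

theorem mem_affineSpan_pair_of_cross_eq_zero {B C P : ℝ²} (hBC : B ≠ C)
    (h : cross (C - B) (P - B) = 0) : P ∈ line[ℝ, B, C] := by
  have hq : (C 0 - B 0) ^ 2 + (C 1 - B 1) ^ 2 ≠ 0 := by
    rw [← dist_sq_eq_coord]; exact pow_ne_zero 2 (dist_ne_zero.2 hBC.symm)
  simp only [cross, PiLp.sub_apply] at h
  rw [← vsub_vadd P B, vadd_left_mem_affineSpan_pair]
  -- the coefficient of the orthogonal projection of `P - B` onto `C - B`
  refine ⟨((P 0 - B 0) * (C 0 - B 0) + (P 1 - B 1) * (C 1 - B 1)) /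
    ((C 0 - B 0) ^ 2 + (C 1 - B 1) ^ 2), ?_⟩
  ext i
  fin_cases i <;>
    simp only [Fin.zero_eta, Fin.mk_one, vsub_eq_sub, PiLp.smul_apply, PiLp.sub_apply,
      smul_eq_mul] <;>
    field_simp
  · linear_combination (C 1 - B 1) * h
  · linear_combination -(C 0 - B 0) * h

theorem cross_ne_zero_of_affineIndependent {A B C : ℝ²} (h : AffineIndependent ℝ ![A, B, C]) :
    cross (B - A) (C - A) ≠ 0 := by
  rw [affineIndependent_iff_not_collinear_set] at h
  have hBC : B ≠ C := by rintro rfl; simp [collinear_pair] at h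
  intro h0
  rw [cross_sub_rotate] at h0
  exact h (collinear_insert_of_mem_affineSpan_pair (mem_affineSpan_pair_of_cross_eq_zero hBC h0))

theorem AffineSubspace.SSameSide.cross_mul_cross_pos {B C P Q : ℝ²} (hBC : B ≠ C)
    (h : line[ℝ, B, C].SSameSide P Q) : 0 < cross (C - B) (P - B) * cross (C - B) (Q - B) := by
  have hQ : cross (C - B) (Q - B) ≠ 0 := fun h0 =>
    h.right_notMem (mem_affineSpan_pair_of_cross_eq_zero hBC h0)
  obtain ⟨hPs, hQs, p, hp, hray⟩ :=
    (sSameSide_iff_exists_left (left_mem_affineSpan_pair ℝ B C)).1 h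
  have hPB : P -ᵥ B ≠ 0 := vsub_ne_zero.2 fun h0 => hPs (h0 ▸ left_mem_affineSpan_pair ℝ B C)
  have hQp : Q -ᵥ p ≠ 0 := vsub_ne_zero.2 fun h0 => hQs (h0 ▸ hp)
  rw [← vsub_vadd p B, vadd_left_mem_affineSpan_pair] at hp
  obtain ⟨r, hr⟩ := hp
  obtain ⟨r₁, r₂, hr₁, hr₂, hre⟩ := hray.exists_pos hPB hQp
  -- `cross (C - B)` is linear and kills `p - B`, which is parallel to `C - B`
  have hscale : r₁ * cross (C - B) (P - B) = r₂ * cross (C - B) (Q - B) := by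
    have e0 := congrArg (· 0) hre
    have e1 := congrArg (· 1) hre
    have f0 := congrArg (· 0) hr
    have f1 := congrArg (· 1) hr
    simp only [PiLp.smul_apply, smul_eq_mul, vsub_eq_sub, PiLp.sub_apply] at e0 e1 f0 f1
    simp only [cross, PiLp.sub_apply]
    linear_combination (C 0 - B 0) * e1 - (C 1 - B 1) * e0 + r₂ * (C 0 - B 0) * f1 -
      r₂ * (C 1 - B 1) * f0
  refine pos_of_mul_pos_right (a := r₁) ?_ hr₁.le
  rw [← mul_assoc, hscale, mul_assoc, ← sq]
  positivity

noncomputable def apex (B C : ℝ²) (t : ℝ) : ℝ² := midpoint ℝ B C + t • !₂[B 1 - C 1, C 0 - B 0]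

@[simp]
theorem apex_apply_zero (B C : ℝ²) (t : ℝ) :
    apex B C t 0 = (B 0 + C 0) / 2 + t * (B 1 - C 1) := by
  simp only [apex, midpoint_eq_smul_add, invOf_eq_inv, smul_add, PiLp.add_apply, PiLp.smul_apply,
    smul_eq_mul, Matrix.cons_val_zero]
  ring

@[simp]
theorem apex_apply_one (B C : ℝ²) (t : ℝ) :
    apex B C t 1 = (B 1 + C 1) / 2 + t * (C 0 - B 0) := by
  simp only [apex, midpoint_eq_smul_add, invOf_eq_inv, smul_add, PiLp.add_apply, PiLp.smul_apply,
    smul_eq_mul, Matrix.cons_val_one, Matrix.cons_val_fin_one]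
  ring

theorem cross_apex (B C : ℝ²) (t : ℝ) : cross (C - B) (apex B C t - B) = t * dist B C ^ 2 := by
  simp only [cross, PiLp.sub_apply, apex_apply_zero, apex_apply_one, dist_sq_eq_coord]; ring

theorem exists_eq_apex {B C P : ℝ²} (hBC : B ≠ C) (hB : dist P B = dist B C)
    (hC : dist P C = dist B C) : ∃ t : ℝ, t ^ 2 = 3 / 4 ∧ P = apex B C t := by
  have hq : (C 0 - B 0) ^ 2 + (C 1 - B 1) ^ 2 ≠ 0 := by
    rw [← dist_sq_eq_coord]; exact pow_ne_zero 2 (dist_ne_zero.2 hBC.symm)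
  have hB2 := congrArg (· ^ 2) hB
  have hC2 := congrArg (· ^ 2) hC
  simp only [dist_sq_eq_coord] at hB2 hC2
  have hdot : (C 0 - B 0) * (P 0 - B 0) + (C 1 - B 1) * (P 1 - B 1) =
      ((C 0 - B 0) ^ 2 + (C 1 - B 1) ^ 2) / 2 := by
    linear_combination (hB2 - hC2) / 2
  set q := (C 0 - B 0) ^ 2 + (C 1 - B 1) ^ 2
  set t := cross (C - B) (P - B) / q
  have htq : t * q = cross (C - B) (P - B) := div_mul_cancel₀ _ hq
  simp only [cross, PiLp.sub_apply] at htq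
  refine ⟨t, ?_, ?_⟩
  · refine mul_left_cancel₀ (pow_ne_zero 2 hq) ?_
    -- Lagrange's identity `cross u v ^ 2 = ‖u‖² ‖v‖² - ⟪u, v⟫²`
    linear_combination q * hB2
      - ((C 0 - B 0) * (P 0 - B 0) + (C 1 - B 1) * (P 1 - B 1) + q / 2) * hdot
      + (t * q + ((C 0 - B 0) * (P 1 - B 1) - (C 1 - B 1) * (P 0 - B 0))) * htq
  · ext i
    fin_cases i <;> refine mul_left_cancel₀ hq ?_ <;>
      simp only [Fin.zero_eta, Fin.mk_one, apex_apply_zero, apex_apply_one]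
    · linear_combination (C 0 - B 0) * hdot + (C 1 - B 1) * htq
    · linear_combination (C 1 - B 1) * hdot - (C 0 - B 0) * htq

theorem mul_cross_pos_of_sSameSide_apex {A B C : ℝ²} {t : ℝ} (hBC : B ≠ C)
    (h : line[ℝ, B, C].SSameSide (apex B C t) A) : 0 < t * cross (B - A) (C - A) := by
  have hpos := h.cross_mul_cross_pos hBC
  rw [cross_apex, ← cross_sub_rotate, mul_right_comm] at hpos
  exact pos_of_mul_pos_left hpos (sq_nonneg _)

theorem triArea_apex (B C : ℝ²) (t : ℝ) :
    triArea (apex B C t) B C = |t| * dist B C ^ 2 * triArea 0 !₂[1, 0] !₂[0, 1] := by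
  rw [triArea_eq_abs_cross_mul, cross_sub_rotate, cross_apex, abs_mul,
    abs_of_nonneg (sq_nonneg (dist B C))]

theorem cross_centroids_apex (A B C : ℝ²) {t : ℝ} (ht : t ^ 2 = 3 / 4) :
    cross ((3:ℝ)⁻¹ • (A + apex C A t + C) - (3:ℝ)⁻¹ • (apex B C t + B + C))
        ((3:ℝ)⁻¹ • (A + B + apex A B t) - (3:ℝ)⁻¹ • (apex B C t + B + C)) =
      cross (B - A) (C - A) / 2 - t * (dist B C ^ 2 + dist C A ^ 2 + dist A B ^ 2) / 6 := by
  simp only [cross, dist_sq_eq_coord, PiLp.sub_apply, PiLp.add_apply, PiLp.smul_apply, smul_eq_mul,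
    apex_apply_zero, apex_apply_one]
  linear_combination ((B 0 - A 0) * (C 1 - A 1) - (B 1 - A 1) * (C 0 - A 0)) / 3 * ht

theorem twelve_mul_cross_sq_le (A B C : ℝ²) :
    12 * cross (B - A) (C - A) ^ 2 ≤ (dist B C ^ 2 + dist C A ^ 2 + dist A B ^ 2) ^ 2 := by
  have heron : 4 * cross (B - A) (C - A) ^ 2 =
      2 * (dist B C ^ 2 * dist C A ^ 2 + dist C A ^ 2 * dist A B ^ 2 + dist A B ^ 2 * dist B C ^ 2)
        - (dist B C ^ 4 + dist C A ^ 4 + dist A B ^ 4) := by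
    simp only [show ∀ x : ℝ, x ^ 4 = (x ^ 2) ^ 2 from fun x => by ring,
      dist_sq_eq_coord, cross, PiLp.sub_apply]
    ring
  nlinarith [sq_nonneg (dist B C ^ 2 - dist C A ^ 2), sq_nonneg (dist C A ^ 2 - dist A B ^ 2),
    sq_nonneg (dist A B ^ 2 - dist B C ^ 2)]

theorem eq_of_sq_eq_of_mul_pos {s t D : ℝ} (h : s ^ 2 = t ^ 2) (hs : 0 < s * D)
    (ht : 0 < t * D) : s = t := by
  rcases sq_eq_sq_iff_eq_or_eq_neg.1 h with h | rfl
  · exact h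
  · nlinarith

theorem abs_half_sub_eq_of_sq_le {D t S : ℝ} (ht : t ^ 2 = 3 / 4) (htD : 0 < t * D) (hS : 0 ≤ S)
    (hW : 12 * D ^ 2 ≤ S ^ 2) : |D / 2 - t * S / 6| = |t| * S / 6 - |D| / 2 := by
  have h3 : 3 * |D| ≤ |t| * S := by
    have h := sq_le_sq.1 (show (3 * D) ^ 2 ≤ (t * S) ^ 2 by rw [mul_pow, mul_pow, ht]; linarith)
    rwa [abs_mul, abs_mul, abs_of_nonneg hS, abs_of_pos three_pos] at h
  rcases lt_or_gt_of_ne (left_ne_zero_of_mul htD.ne') with htneg | htpos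
  · have hD : D < 0 := neg_of_mul_pos_right htD htneg.le
    rw [abs_of_neg htneg, abs_of_neg hD] at *
    rw [abs_of_nonneg (by nlinarith)]
    linarith
  · have hD : 0 < D := pos_of_mul_pos_right htD htpos.le
    rw [abs_of_pos htpos, abs_of_pos hD] at *
    rw [abs_of_nonpos (by nlinarith)]
    linarith

theorem napoleon_inner_area
    (A B C A₁' B₁' C₁' : EuclideanSpace ℝ (Fin 2))
    (hABC : AffineIndependent ℝ ![A, B, C])
    (hA₁' : dist A₁' B = dist B C) (hA₁'2 : dist A₁' C = dist B C)
    (hB₁' : dist A B₁' = dist A C) (hB₁'2 : dist B₁' C = dist A C)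
    (hC₁' : dist A C₁' = dist A B) (hC₁'2 : dist B C₁' = dist A B)
    (hsideA' : (affineSpan ℝ {B, C}).SSameSide A₁' A)
    (hsideB' : (affineSpan ℝ {C, A}).SSameSide B₁' B)
    (hsideC' : (affineSpan ℝ {A, B}).SSameSide C₁' C)
    (G₁' G₂' G₃' : EuclideanSpace ℝ (Fin 2))
    (hG₁' : G₁' = (3:ℝ)⁻¹ • (A₁' + B + C))
    (hG₂' : G₂' = (3:ℝ)⁻¹ • (A + B₁' + C))
    (hG₃' : G₃' = (3:ℝ)⁻¹ • (A + B + C₁')) :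
    triArea G₁' G₂' G₃' =
      (1/6) * (triArea A₁' B C + triArea A B₁' C + triArea A B C₁') -
        (1/2) * triArea A B C := by
  have hD := cross_ne_zero_of_affineIndependent hABC
  have hAB : A ≠ B := by rintro rfl; exact hD (by simp only [cross, PiLp.sub_apply]; ring)
  have hBC : B ≠ C := by rintro rfl; exact hD (by simp only [cross, PiLp.sub_apply]; ring)
  have hCA : C ≠ A := by rintro rfl; exact hD (by simp only [cross, PiLp.sub_apply]; ring)
  obtain ⟨t, ht, rfl⟩ := exists_eq_apex hBC hA₁' hA₁'2
  obtain ⟨t₂, ht₂, rfl⟩ := exists_eq_apex hCA (hB₁'2.trans (dist_comm A C))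
    ((dist_comm _ _).trans (hB₁'.trans (dist_comm A C)))
  obtain ⟨t₃, ht₃, rfl⟩ :=
    exists_eq_apex hAB ((dist_comm _ _).trans hC₁') ((dist_comm _ _).trans hC₁'2)
  have hsign := mul_cross_pos_of_sSameSide_apex hBC hsideA'
  have hsign₂ := mul_cross_pos_of_sSameSide_apex hCA hsideB'
  have hsign₃ := mul_cross_pos_of_sSameSide_apex hAB hsideC'
  rw [← cross_sub_rotate] at hsign₂
  rw [cross_sub_rotate] at hsign₃
  obtain rfl : t = t₂ := eq_of_sq_eq_of_mul_pos (ht.trans ht₂.symm) hsign hsign₂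
  obtain rfl : t = t₃ := eq_of_sq_eq_of_mul_pos (ht.trans ht₃.symm) hsign hsign₃
  subst hG₁' hG₂' hG₃'
  rw [← triArea_rotate A, triArea_rotate (apex A B t), triArea_apex, triArea_apex, triArea_apex,
    triArea_eq_abs_cross_mul A, triArea_eq_abs_cross_mul, cross_centroids_apex A B C ht,
    abs_half_sub_eq_of_sq_le ht hsign (by positivity) (twelve_mul_cross_sq_le A B C)]
  ring
end

section
/- Let A₁, B₁ be the apexes of the equilateral triangles erected on sides BC and CA of a nondegenerate triangle ABC on the opposite sides of those lines from A and B respectively (the outer apexes), and let C₁' be the apex of the equilateral triangle erected on side AB on the same side of line AB as C (the inner apex), i.e. dist A₁ B = dist A₁ C = dist B C, dist A B₁ = dist B₁ C = dist A C, dist A C₁' = dist B C₁' = dist A B. Then the midpoint of the segment A₁B₁ equals the midpoint of the segment CC₁': (A₁+B₁)/2 = (C+C₁')/2. -/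
/-!
Orient the plane so that `ABC` is counterclockwise, and let `J` be the rotation by `π / 2`.
The two apexes of equilateral triangles on a segment `pq` are `(p + q) / 2 ± (√3 / 2) J (q - p)`,
and the sign is the side of the line `pq` the apex lies on. The side conditions therefore
identify `A₁`, `B₁`, `C₁'` as the apexes to the left of `CB`, `AC`, `AB` respectively, and for
these the rotated terms cancel: `J (B - C) + J (C - A) = J (B - A)`.
-/

open Module RealInnerProductSpace

theorem SameRay.mul_nonneg {R : Type*} [Field R] [LinearOrder R] [IsStrictOrderedRing R]
    {a b : R} (h : SameRay R a b) : 0 ≤ a * b := by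
  rcases h with rfl | rfl | ⟨r₁, r₂, hr₁, hr₂, h⟩
  · simp
  · simp
  · simp only [smul_eq_mul] at h
    have key : r₁ * r₂ * (a * b) = (r₁ * a) ^ 2 := by linear_combination (-(r₁ * a)) * h
    exact nonneg_of_mul_nonneg_right (key ▸ sq_nonneg _) (mul_pos hr₁ hr₂)

namespace AffineSubspace

variable {R V P : Type*} [Field R] [LinearOrder R] [IsStrictOrderedRing R]
  [AddCommGroup V] [Module R V] [AddTorsor V P] {s : AffineSubspace R P} {x y : P}

theorem WOppSide.mul_nonpos_of_forall_eq_zero (h : s.WOppSide x y) (f : P →ᵃ[R] R)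
    (hf : ∀ z ∈ s, f z = 0) : f x * f y ≤ 0 := by
  obtain ⟨p₁, hp₁, p₂, hp₂, hray⟩ := h
  have := (hray.map f.linear).mul_nonneg
  rw [f.linearMap_vsub, f.linearMap_vsub, hf p₁ hp₁, hf p₂ hp₂, vsub_eq_sub, vsub_eq_sub] at this
  linarith

theorem WSameSide.mul_nonneg_of_forall_eq_zero (h : s.WSameSide x y) (f : P →ᵃ[R] R)
    (hf : ∀ z ∈ s, f z = 0) : 0 ≤ f x * f y := by
  obtain ⟨p₁, hp₁, p₂, hp₂, hray⟩ := h
  have := (hray.map f.linear).mul_nonneg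
  rwa [f.linearMap_vsub, f.linearMap_vsub, hf p₁ hp₁, hf p₂ hp₂, vsub_eq_sub, vsub_eq_sub,
    sub_zero, sub_zero] at this

end AffineSubspace

namespace Orientation

variable {E : Type*} [NormedAddCommGroup E] [InnerProductSpace ℝ E] [Fact (finrank ℝ E = 2)]
  (o : Orientation ℝ E (Fin 2))

local notation "ω" => o.areaForm
local notation "J" => o.rightAngleRotation

theorem norm_sq_smul_eq_inner_smul_add_areaForm_smul (a x : E) :
    ‖a‖ ^ 2 • x = ⟪a, x⟫ • a + ω a x • J a := by
  refine ext_inner_right ℝ fun y => ?_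
  simp only [inner_add_left, real_inner_smul_left, o.inner_rightAngleRotation_left,
    ← o.inner_mul_inner_add_areaForm_mul_areaForm a x y]

/-- Twice the signed area of the triangle `p q z`. -/
noncomputable def signedArea (p q : E) : E →ᵃ[ℝ] ℝ where
  toFun z := ω (q - p) (z - p)
  linear := ω (q - p)
  map_vadd' z v := by
    simp only [vadd_eq_add, map_sub, map_add, LinearMap.sub_apply]
    abel

@[simp]
theorem signedArea_apply (p q z : E) : o.signedArea p q z = ω (q - p) (z - p) := rfl

theorem signedArea_swap (p q z : E) : o.signedArea q p z = -o.signedArea p q z := by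
  simp only [signedArea_apply, map_sub, LinearMap.sub_apply, areaForm_apply_self]
  rw [o.areaForm_swap p q]
  ring

theorem signedArea_rotate (p q z : E) : o.signedArea q z p = o.signedArea p q z := by
  simp only [signedArea_apply, map_sub, LinearMap.sub_apply, areaForm_apply_self]
  rw [o.areaForm_swap z p, o.areaForm_swap z q]
  ring

theorem signedArea_eq_zero_of_mem {p q z : E} (hz : z ∈ line[ℝ, p, q]) :
    o.signedArea p q z = 0 := by
  obtain ⟨r, rfl⟩ := mem_affineSpan_pair_iff_exists_lineMap_eq.1 hz
  simp only [signedArea_apply, AffineMap.lineMap_apply, vadd_eq_add, add_sub_cancel_right,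
    vsub_eq_sub, map_smul, smul_eq_mul, areaForm_apply_self, mul_zero]

theorem signedArea_ne_zero {p q z : E} (h : AffineIndependent ℝ ![p, q, z]) :
    o.signedArea p q z ≠ 0 := by
  intro h0
  have hrel := o.norm_sq_smul_eq_inner_smul_add_areaForm_smul (q - p) (z - p)
  rw [← signedArea_apply, h0, zero_smul, add_zero] at hrel
  -- `hrel` read as an affine dependence among `p, q, z`
  have hqp : ‖q - p‖ ^ 2 = 0 := h.eq_zero_of_sum_eq_zero (s := Finset.univ)
    (w := ![⟪q - p, z - p⟫ - ‖q - p‖ ^ 2, -⟪q - p, z - p⟫, ‖q - p‖ ^ 2])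
    (by simp only [Fin.sum_univ_three, Matrix.cons_val]; ring)
    (by
      simp only [Fin.sum_univ_three, Matrix.cons_val]
      linear_combination (norm := module) hrel) 2
    (Finset.mem_univ _)
  exact h.injective.ne (show (0 : Fin 3) ≠ 1 by decide)
    (by simpa [sub_eq_zero, eq_comm] using hqp)

theorem signedArea_nonpos_of_wOppSide {p q x y : E} (h : line[ℝ, p, q].WOppSide x y)
    (hx : 0 < o.signedArea p q x) : o.signedArea p q y ≤ 0 :=
  nonpos_of_mul_nonpos_right
    (h.mul_nonpos_of_forall_eq_zero _ fun _ hz => o.signedArea_eq_zero_of_mem hz) hx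

theorem signedArea_nonneg_of_wSameSide {p q x y : E} (h : line[ℝ, p, q].WSameSide x y)
    (hy : 0 < o.signedArea p q y) : 0 ≤ o.signedArea p q x :=
  nonneg_of_mul_nonneg_left
    (h.mul_nonneg_of_forall_eq_zero _ fun _ hz => o.signedArea_eq_zero_of_mem hz) hy

noncomputable def equilateralApex (p q : E) : E := midpoint ℝ p q + (√3 / 2) • J (q - p)

theorem equilateralApex_swap (p q : E) :
    o.equilateralApex q p = midpoint ℝ p q - (√3 / 2) • J (q - p) := by
  rw [equilateralApex, midpoint_comm, ← neg_sub q p, map_neg, smul_neg, ← sub_eq_add_neg]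

theorem signedArea_equilateralApex (p q : E) :
    o.signedArea p q (o.equilateralApex p q) = √3 / 2 * ‖q - p‖ ^ 2 := by
  rw [signedArea_apply, equilateralApex, add_sub_right_comm, midpoint_sub_left, map_add,
    map_smul, map_smul, areaForm_apply_self, areaForm_rightAngleRotation_right,
    real_inner_self_eq_norm_sq]
  simp

theorem eq_smul_rightAngleRotation_or_eq_neg {v w : E} {c : ℝ} (hc : 0 ≤ c)
    (hinner : ⟪v, w⟫ = 0) (hnorm : ‖w‖ = c * ‖v‖) : w = c • J v ∨ w = -(c • J v) := by
  rcases eq_or_ne v 0 with rfl | hv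
  · left
    simpa using hnorm
  obtain ⟨r, rfl⟩ :=
    (o.inner_eq_zero_iff_eq_zero_or_eq_smul_rotation_pi_div_two.1 hinner).resolve_left hv
  rw [o.rotation_pi_div_two] at hnorm ⊢
  rw [norm_smul, LinearIsometryEquiv.norm_map, Real.norm_eq_abs] at hnorm
  rcases (abs_eq hc).1 (mul_right_cancel₀ (norm_ne_zero_iff.2 hv) hnorm) with rfl | rfl
  · exact Or.inl rfl
  · exact Or.inr (neg_smul _ _)

theorem eq_equilateralApex_or {p q x : E} (h₁ : dist x p = dist p q) (h₂ : dist x q = dist p q) :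
    x = o.equilateralApex p q ∨ x = o.equilateralApex q p := by
  have hperp : ⟪q - p, x - midpoint ℝ p q⟫ = 0 :=
    AffineSubspace.mem_perpBisector_iff_inner_eq_zero'.1
      (AffineSubspace.mem_perpBisector_iff_dist_eq.2 (h₁.trans h₂.symm))
  have hnorm : ‖x - midpoint ℝ p q‖ = √3 / 2 * ‖q - p‖ := by
    have apollonius :=
      EuclideanGeometry.dist_sq_add_dist_sq_eq_two_mul_dist_midpoint_sq_add_half_dist_sq x p q
    rw [h₁, h₂, dist_eq_norm, dist_eq_norm, ← norm_neg (p - q), neg_sub] at apollonius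
    refine (pow_left_inj₀ (norm_nonneg _) (by positivity) two_ne_zero).1 ?_
    rw [mul_pow, div_pow, Real.sq_sqrt zero_le_three]
    linarith
  rcases o.eq_smul_rightAngleRotation_or_eq_neg (by positivity) hperp hnorm with h | h
  · left
    rw [equilateralApex]
    linear_combination (norm := module) h
  · right
    rw [equilateralApex_swap]
    linear_combination (norm := module) h

theorem eq_equilateralApex_of_signedArea_nonneg {p q x : E} (h₁ : dist x p = dist p q)
    (h₂ : dist x q = dist p q) (hpq : p ≠ q) (hx : 0 ≤ o.signedArea p q x) :
    x = o.equilateralApex p q := by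
  refine (o.eq_equilateralApex_or h₁ h₂).resolve_right fun hx' => ?_
  rw [hx', signedArea_swap, signedArea_equilateralApex, neg_nonneg] at hx
  have : 0 < ‖p - q‖ := norm_pos_iff.2 (sub_ne_zero.2 hpq)
  exact hx.not_gt (by positivity)

theorem equilateralApex_add_equilateralApex (a b c : E) :
    o.equilateralApex c b + o.equilateralApex a c = c + o.equilateralApex a b := by
  simp only [equilateralApex, midpoint_eq_smul_add, invOf_eq_inv, map_sub]
  module

end Orientation

theorem exists_orientation_signedArea_pos {E : Type*} [NormedAddCommGroup E]
    [InnerProductSpace ℝ E] [Fact (finrank ℝ E = 2)] {p q z : E}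
    (h : AffineIndependent ℝ ![p, q, z]) :
    ∃ o : Orientation ℝ E (Fin 2), 0 < o.signedArea p q z := by
  have := FiniteDimensional.of_fact_finrank_eq_two (K := ℝ) (V := E)
  let o₀ : Orientation ℝ E (Fin 2) := (finBasisOfFinrankEq ℝ E Fact.out).orientation
  rcases (o₀.signedArea_ne_zero h).lt_or_gt with hneg | hpos
  · exact ⟨-o₀, by simpa [Orientation.areaForm_neg_orientation] using hneg⟩
  · exact ⟨o₀, hpos⟩

theorem napoleon_mixed_midpoint
    (A B C A₁ B₁ C₁' : EuclideanSpace ℝ (Fin 2))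
    (hABC : AffineIndependent ℝ ![A, B, C])
    (hA₁ : dist A₁ B = dist B C) (hA₁' : dist A₁ C = dist B C)
    (hB₁ : dist A B₁ = dist A C) (hB₁' : dist B₁ C = dist A C)
    (hC₁' : dist A C₁' = dist A B) (hC₁'2 : dist B C₁' = dist A B)
    (hsideA : (affineSpan ℝ {B, C}).SOppSide A A₁)
    (hsideB : (affineSpan ℝ {C, A}).SOppSide B B₁)
    (hsideC : (affineSpan ℝ {A, B}).SSameSide C₁' C) :
    (2:ℝ)⁻¹ • (A₁ + B₁) = (2:ℝ)⁻¹ • (C + C₁') := by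
  have : Fact (finrank ℝ (EuclideanSpace ℝ (Fin 2)) = 2) := ⟨finrank_euclideanSpace_fin⟩
  obtain ⟨o, hpos⟩ := exists_orientation_signedArea_pos hABC
  have hAB : A ≠ B := hABC.injective.ne (show (0 : Fin 3) ≠ 1 by decide)
  have hBC : B ≠ C := hABC.injective.ne (show (1 : Fin 3) ≠ 2 by decide)
  have hCA : C ≠ A := hABC.injective.ne (show (2 : Fin 3) ≠ 0 by decide)
  have hA₁_eq : A₁ = o.equilateralApex C B := by
    refine o.eq_equilateralApex_of_signedArea_nonneg (hA₁'.trans (dist_comm B C))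
      (hA₁.trans (dist_comm B C)) hBC.symm ?_
    rw [o.signedArea_swap, neg_nonneg]
    exact o.signedArea_nonpos_of_wOppSide hsideA.wOppSide (by rwa [o.signedArea_rotate])
  have hB₁_eq : B₁ = o.equilateralApex A C := by
    refine o.eq_equilateralApex_of_signedArea_nonneg ((dist_comm _ _).trans hB₁) hB₁'
      hCA.symm ?_
    rw [o.signedArea_swap, neg_nonneg]
    exact o.signedArea_nonpos_of_wOppSide hsideB.wOppSide
      (by rwa [o.signedArea_rotate, o.signedArea_rotate])
  have hC₁'_eq : C₁' = o.equilateralApex A B :=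
    o.eq_equilateralApex_of_signedArea_nonneg ((dist_comm _ _).trans hC₁')
      ((dist_comm _ _).trans hC₁'2) hAB (o.signedArea_nonneg_of_wSameSide hsideC.wSameSide hpos)
  rw [hA₁_eq, hB₁_eq, hC₁'_eq, o.equilateralApex_add_equilateralApex]
end

section
/- Let A₁', B₁', C₁' be an overlapping Napoleon configuration for a nondegenerate triangle ABC in the Euclidean plane, and let A₂', B₂', C₂' be the midpoints of B₁'C₁', C₁'A₁', A₁'B₁' respectively. Let A** = (A+B₂'+C₂')/3, B** = (A₂'+B+C₂')/3 and C** = (A₂'+B₂'+C)/3 be the centroids of the equilateral triangles AB₂'C₂', A₂'BC₂' and A₂'B₂'C. Then the triangle A**B**C** is equilateral and its centroid (A**+B**+C**)/3 equals the centroid G = (A+B+C)/3 of triangle ABC. -/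
/-!
Write `J` for the quarter-turn rotation and `ω` for the area form of an orientation of the
plane. The apex of an equilateral triangle erected on `XY` is `(X + Y)/2 + k • J (Y - X)` with
`k ^ 2 = 3/4`, and the sign of `k` says on which side of `XY` it lies. The three inner apexes
lie on the side of the third vertex, so they all share the `k` whose sign is that of the
orientation `ω (B - A) (C - A)` of `ABC`. Then `A** = A/2 + (B + C)/4 + (k/6) • J (C - B)`,
and `B**`, `C**` are its cyclic shifts; these sum to `A + B + C`, and
`‖A** - B**‖² = (AB² + BC² + CA²)/24 + (k/6) ω (B - A) (C - A)`
is invariant under cyclic shifts.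
-/

open AffineSubspace Module RealInnerProductSpace

theorem eq_of_sq_eq_of_mul_pos_s16 {a b s : ℝ} (h : a ^ 2 = b ^ 2) (ha : 0 < a * s) (hb : 0 < b * s) :
    a = b := by
  rcases sq_eq_sq_iff_eq_or_eq_neg.1 h with h | h
  · exact h
  · rw [h, neg_mul] at ha
    linarith

namespace Orientation

variable {V : Type*} [NormedAddCommGroup V] [InnerProductSpace ℝ V] [Fact (finrank ℝ V = 2)]
  (o : Orientation ℝ V (Fin 2))

local notation "ω" => o.areaForm
local notation "J" => o.rightAngleRotation

theorem norm_sq_smul_eq_inner_smul_add_areaForm_smul_s16 (u v : V) :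
    ‖u‖ ^ 2 • v = ⟪u, v⟫ • u + ω u v • J u := by
  by_cases hu : u = 0
  · simp [hu]
  refine InnerProductSpace.ext_inner_left_basis (o.basisRightAngleRotation u hu) fun i => ?_
  fin_cases i
  · simp [inner_smul_right, inner_add_right, mul_comm]
  · simp [inner_smul_right, inner_add_right, mul_comm, o.areaForm_swap u v]

theorem areaForm_sub_eq_zero_iff_mem_line {X Y P : V} (hXY : X ≠ Y) :
    ω (Y - X) (P - X) = 0 ↔ P ∈ line[ℝ, X, Y] := by
  conv_rhs => rw [← vsub_vadd P X, vadd_left_mem_affineSpan_pair]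
  simp only [vsub_eq_sub]
  constructor
  · intro h
    have hu : ‖Y - X‖ ^ 2 ≠ 0 := by simpa [sub_eq_zero] using hXY.symm
    refine ⟨⟪Y - X, P - X⟫ / ‖Y - X‖ ^ 2, ?_⟩
    have := o.norm_sq_smul_eq_inner_smul_add_areaForm_smul_s16 (Y - X) (P - X)
    rw [h, zero_smul, add_zero] at this
    rw [div_eq_inv_mul, mul_smul, ← this, smul_smul, inv_mul_cancel₀ hu, one_smul]
  · rintro ⟨r, hr⟩
    rw [← hr, map_smul, o.areaForm_apply_self, smul_zero]

theorem areaForm_mul_pos_of_sSameSide {X Y P Q : V} (hXY : X ≠ Y)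
    (h : line[ℝ, X, Y].SSameSide P Q) :
    0 < ω (Y - X) (P - X) * ω (Y - X) (Q - X) := by
  obtain ⟨hP, hQ, p, hp, hray⟩ :=
    (sSameSide_iff_exists_left (left_mem_affineSpan_pair ℝ X Y)).1 h
  have hp' : ω (Y - X) (p - X) = 0 := (o.areaForm_sub_eq_zero_iff_mem_line hXY).2 hp
  have hnonneg : 0 ≤ ω (Y - X) (P - X) * ω (Y - X) (Q - X) := by
    obtain ⟨w, a, b, ha, hb, -, hPa, hQb⟩ := (hray.map (ω (Y - X))).exists_eq_smul
    have hQ' : ω (Y - X) (Q - p) = ω (Y - X) (Q - X) := by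
      rw [← sub_sub_sub_cancel_right Q p X, map_sub, hp', sub_zero]
    simp only [vsub_eq_sub, smul_eq_mul] at hPa hQb
    rw [← hQ', hPa, hQb]
    nlinarith [mul_nonneg ha hb, sq_nonneg w]
  refine lt_of_le_of_ne hnonneg (Ne.symm (mul_ne_zero ?_ ?_))
  · exact fun h0 => hP ((o.areaForm_sub_eq_zero_iff_mem_line hXY).1 h0)
  · exact fun h0 => hQ ((o.areaForm_sub_eq_zero_iff_mem_line hXY).1 h0)

theorem exists_eq_equilateral_apex {X Y P : V} (hXY : X ≠ Y) (hPX : dist P X = dist X Y)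
    (hPY : dist P Y = dist X Y) :
    ∃ k : ℝ, k ^ 2 = 3 / 4 ∧ P = (2:ℝ)⁻¹ • (X + Y) + k • J (Y - X) := by
  set u := Y - X
  set w := P - (2:ℝ)⁻¹ • (X + Y)
  have hu : ‖u‖ ^ 2 ≠ 0 := by simpa [u, sub_eq_zero] using hXY.symm
  have hXY' : dist X Y = ‖u‖ := by rw [dist_comm, dist_eq_norm]
  have hPX' : ‖w + (2:ℝ)⁻¹ • u‖ ^ 2 = ‖u‖ ^ 2 := by
    rw [← hXY', ← hPX, dist_eq_norm]; congr 2; simp only [w, u]; module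
  have hPY' : ‖w - (2:ℝ)⁻¹ • u‖ ^ 2 = ‖u‖ ^ 2 := by
    rw [← hXY', ← hPY, dist_eq_norm]; congr 2; simp only [w, u]; module
  simp only [norm_add_sq_real, norm_sub_sq_real, real_inner_smul_right, norm_smul,
    Real.norm_eq_abs, mul_pow, sq_abs] at hPX' hPY'
  have horth : ⟪u, w⟫ = 0 := by rw [real_inner_comm]; linarith
  have hw : ‖w‖ ^ 2 = 3 / 4 * ‖u‖ ^ 2 := by linarith
  have hωsq : ω u w ^ 2 = 3 / 4 * (‖u‖ ^ 2) ^ 2 := by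
    linear_combination o.inner_sq_add_areaForm_sq u w + ‖u‖ ^ 2 * hw - ⟪u, w⟫ * horth
  refine ⟨ω u w / ‖u‖ ^ 2, ?_, ?_⟩
  · rw [div_pow, hωsq, mul_div_assoc, div_self (pow_ne_zero 2 hu), mul_one]
  · have hdec := o.norm_sq_smul_eq_inner_smul_add_areaForm_smul_s16 u w
    rw [horth, zero_smul, zero_add] at hdec
    rw [div_eq_inv_mul, mul_smul, ← hdec, smul_smul, inv_mul_cancel₀ hu, one_smul]
    simp only [w]; abel

theorem mul_areaForm_pos_of_sSameSide_apex {X Y Q : V} {k : ℝ} (hXY : X ≠ Y)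
    (h : line[ℝ, X, Y].SSameSide ((2:ℝ)⁻¹ • (X + Y) + k • J (Y - X)) Q) :
    0 < k * ω (Y - X) (Q - X) := by
  have hpos := o.areaForm_mul_pos_of_sSameSide hXY h
  set P := (2:ℝ)⁻¹ • (X + Y) + k • J (Y - X)
  have hPX : P - X = (2:ℝ)⁻¹ • (Y - X) + k • J (Y - X) := by simp only [P]; module
  have hapex : ω (Y - X) (P - X) = k * ‖Y - X‖ ^ 2 := by
    rw [hPX]
    simp only [map_add, map_smul, o.areaForm_apply_self, o.areaForm_rightAngleRotation_right,
      real_inner_self_eq_norm_sq, smul_eq_mul, mul_zero, zero_add]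
  rw [hapex, mul_right_comm] at hpos
  exact pos_of_mul_pos_left hpos (sq_nonneg _)

theorem areaForm_sub_sub_rotate (A B C : V) : ω (B - A) (C - A) = ω (C - B) (A - B) := by
  simp only [map_sub, LinearMap.sub_apply, o.areaForm_apply_self, o.areaForm_swap A C,
    o.areaForm_swap B C]
  ring

theorem norm_smul_add_smul_rightAngleRotation_sq (s t : ℝ) (x y : V) :
    ‖s • x + t • J y‖ ^ 2 = s ^ 2 * ‖x‖ ^ 2 - 2 * s * t * ω x y + t ^ 2 * ‖y‖ ^ 2 := by
  rw [norm_add_sq_real, real_inner_smul_left, real_inner_smul_right,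
    o.inner_rightAngleRotation_right, norm_smul, norm_smul, LinearIsometryEquiv.norm_map]
  simp only [Real.norm_eq_abs, mul_pow, sq_abs]
  ring

noncomputable def napoleonDoubleStar (k : ℝ) (A B C : V) : V :=
  (2:ℝ)⁻¹ • A + (4:ℝ)⁻¹ • (B + C) + (k / 6) • J (C - B)

theorem dist_napoleonDoubleStar_sq {k : ℝ} (hk : k ^ 2 = 3 / 4) (A B C : V) :
    dist (o.napoleonDoubleStar k A B C) (o.napoleonDoubleStar k B C A) ^ 2 =
      (dist A B ^ 2 + dist B C ^ 2 + dist C A ^ 2) / 24 + k / 6 * ω (B - A) (C - A) := by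
  set a := A - C
  set b := B - C
  have hdiff : o.napoleonDoubleStar k A B C - o.napoleonDoubleStar k B C A =
      (4:ℝ)⁻¹ • (a - b) + (-(k / 6)) • J (a + b) := by
    simp only [napoleonDoubleStar, a, b, map_sub, map_add]
    module
  have hAB : A - B = a - b := (sub_sub_sub_cancel_right A B C).symm
  have hCA : C - A = -a := (neg_sub A C).symm
  have hBA : B - A = b - a := (sub_sub_sub_cancel_right B A C).symm
  have hω : ω (a - b) (a + b) = 2 * ω a b := by
    simp only [map_sub, map_add, LinearMap.sub_apply, o.areaForm_apply_self,
      o.areaForm_swap b a]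
    ring
  have hω' : ω (b - a) (-a) = ω a b := by
    simp only [map_sub, map_neg, LinearMap.sub_apply, o.areaForm_apply_self, o.areaForm_swap b a]
    ring
  rw [dist_eq_norm, hdiff, o.norm_smul_add_smul_rightAngleRotation_sq, hω, dist_eq_norm A B,
    dist_eq_norm B C, dist_eq_norm C A, hAB, hCA, hBA, hω', norm_neg, norm_add_sq_real,
    norm_sub_sq_real]
  linear_combination (‖a‖ ^ 2 + 2 * ⟪a, b⟫ + ‖b‖ ^ 2) / 36 * hk

theorem dist_napoleonDoubleStar_eq {k : ℝ} (hk : k ^ 2 = 3 / 4) (A B C : V) :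
    dist (o.napoleonDoubleStar k A B C) (o.napoleonDoubleStar k B C A) =
      dist (o.napoleonDoubleStar k B C A) (o.napoleonDoubleStar k C A B) := by
  rw [← sq_eq_sq₀ dist_nonneg dist_nonneg, o.dist_napoleonDoubleStar_sq hk,
    o.dist_napoleonDoubleStar_sq hk, o.areaForm_sub_sub_rotate A B C]
  ring

theorem napoleonDoubleStar_add_add (k : ℝ) (A B C : V) :
    o.napoleonDoubleStar k A B C + o.napoleonDoubleStar k B C A + o.napoleonDoubleStar k C A B =
      A + B + C := by
  simp only [napoleonDoubleStar, map_sub]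
  module

end Orientation

open scoped EuclideanSpace

theorem napoleon_doublestar_triangle
    (A B C A₁' B₁' C₁' : EuclideanSpace ℝ (Fin 2))
    (hABC : AffineIndependent ℝ ![A, B, C])
    (hA₁' : dist A₁' B = dist B C) (hA₁'2 : dist A₁' C = dist B C)
    (hB₁' : dist A B₁' = dist A C) (hB₁'2 : dist B₁' C = dist A C)
    (hC₁' : dist A C₁' = dist A B) (hC₁'2 : dist B C₁' = dist A B)
    (hsideA' : (affineSpan ℝ {B, C}).SSameSide A₁' A)
    (hsideB' : (affineSpan ℝ {C, A}).SSameSide B₁' B)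
    (hsideC' : (affineSpan ℝ {A, B}).SSameSide C₁' C)
    (A₂' B₂' C₂' Ass Bss Css : EuclideanSpace ℝ (Fin 2))
    (hA₂' : A₂' = (2:ℝ)⁻¹ • (B₁' + C₁'))
    (hB₂' : B₂' = (2:ℝ)⁻¹ • (C₁' + A₁'))
    (hC₂' : C₂' = (2:ℝ)⁻¹ • (A₁' + B₁'))
    (hAss : Ass = (3:ℝ)⁻¹ • (A + B₂' + C₂'))
    (hBss : Bss = (3:ℝ)⁻¹ • (A₂' + B + C₂'))
    (hCss : Css = (3:ℝ)⁻¹ • (A₂' + B₂' + C)) :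
    (dist Ass Bss = dist Bss Css ∧ dist Bss Css = dist Css Ass) ∧
      (3:ℝ)⁻¹ • (Ass + Bss + Css) = (3:ℝ)⁻¹ • (A + B + C) := by
  let o : Orientation ℝ (EuclideanSpace ℝ (Fin 2)) (Fin 2) :=
    (EuclideanSpace.basisFun (Fin 2) ℝ).toBasis.orientation
  have hAB : A ≠ B := by simpa using hABC.injective.ne (show (0 : Fin 3) ≠ 1 by decide)
  have hBC : B ≠ C := by simpa using hABC.injective.ne (show (1 : Fin 3) ≠ 2 by decide)
  have hCA : C ≠ A := by simpa using hABC.injective.ne (show (2 : Fin 3) ≠ 0 by decide)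
  obtain ⟨k, hk, rfl⟩ := o.exists_eq_equilateral_apex hBC hA₁' hA₁'2
  obtain ⟨k', hk', rfl⟩ := o.exists_eq_equilateral_apex hCA
    (hB₁'2.trans (dist_comm A C)) ((dist_comm B₁' A).trans (hB₁'.trans (dist_comm A C)))
  obtain ⟨k'', hk'', rfl⟩ := o.exists_eq_equilateral_apex hAB
    ((dist_comm C₁' A).trans hC₁') ((dist_comm C₁' B).trans hC₁'2)
  have h₁ := o.mul_areaForm_pos_of_sSameSide_apex hBC hsideA'
  have h₂ := o.mul_areaForm_pos_of_sSameSide_apex hCA hsideB'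
  have h₃ := o.mul_areaForm_pos_of_sSameSide_apex hAB hsideC'
  rw [← o.areaForm_sub_sub_rotate A B C] at h₁
  rw [o.areaForm_sub_sub_rotate C A B] at h₂
  obtain rfl : k = k' := eq_of_sq_eq_of_mul_pos_s16 (hk.trans hk'.symm) h₁ h₂
  obtain rfl : k = k'' := eq_of_sq_eq_of_mul_pos_s16 (hk.trans hk''.symm) h₁ h₃
  have hAss' : Ass = o.napoleonDoubleStar k A B C := by
    simp only [hAss, hB₂', hC₂', Orientation.napoleonDoubleStar, map_sub]; module
  have hBss' : Bss = o.napoleonDoubleStar k B C A := by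
    simp only [hBss, hA₂', hC₂', Orientation.napoleonDoubleStar, map_sub]; module
  have hCss' : Css = o.napoleonDoubleStar k C A B := by
    simp only [hCss, hA₂', hB₂', Orientation.napoleonDoubleStar, map_sub]; module
  subst hAss' hBss' hCss'
  exact ⟨⟨o.dist_napoleonDoubleStar_eq hk A B C, o.dist_napoleonDoubleStar_eq hk B C A⟩,
    by rw [o.napoleonDoubleStar_add_add]⟩
end
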